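/- arXiv:math/0503439 — 7 statements merged into one kernel-verified Lean document; each statement's English description precedes it below -/
import Mathlib

section
/- Let X be a compact Hausdorff space, U ⊆ X an open subset, and σ : U → X a local homeomorphism. For a positive function ρ ∈ C(U) and f ∈ C_c(U), define L_ρ(f)(x) = Σ_{y ∈ σ⁻¹(x)} ρ(y) f(y) for x ∈ σ(U) and L_ρ(f)(x) = 0 otherwise. Then L_ρ(f) is a continuous function on X. -/
open scoped Classical

/-- The transfer-operator-type map `L_ρ(f)` associated to a local homeomorphism
`σ : U → X`, a weight `ρ` and `f ∈ C_c(U)`. -/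
noncomputable def Lrho {X : Type*} [TopologicalSpace X] {U : Set X}
    (σ : U → X) (ρ : U → ℝ) (f : U → ℂ) : X → ℂ :=
  fun x => if x ∈ Set.range σ then ∑ᶠ y ∈ σ ⁻¹' {x}, (ρ y : ℂ) * f y else 0

/-- if `X` is compact Hausdorff, `U ⊆ X` open, `σ : U → X` a local
homeomorphism, `ρ ∈ C(U)` nonnegative and `f ∈ C_c(U)`, then `L_ρ(f)` is continuous on `X`. -/
theorem continuous_Lrho {X : Type*} [TopologicalSpace X] [CompactSpace X] [T2Space X]
    (U : Set X) (hU : IsOpen U) (σ : U → X) (hσ : IsLocalHomeomorph σ)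
    (ρ : U → ℝ) (hρc : Continuous ρ) (hρ : ∀ y, 0 ≤ ρ y)
    (f : U → ℂ) (hfc : Continuous f) (hf : HasCompactSupport f) :
    Continuous (Lrho σ ρ f) := by
  have hσc : Continuous σ := hσ.continuous
  choose e hes heσ using hσ
  set g : U → ℂ := fun z => (ρ z : ℂ) * f z with hg
  have hgc : Continuous g := by
    exact (Complex.continuous_ofReal.comp hρc).mul hfc
  have hgsupp : Function.support g ⊆ tsupport f := fun z hz => by
    apply subset_tsupport f
    intro hfz
    simp [hg, hfz] at hz
  rw [continuous_iff_continuousAt]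
  intro x
  set K := tsupport f with hK
  -- the relevant part of the fiber over x
  set S : Set U := σ ⁻¹' {x} ∩ K with hS
  have hScomp : IsCompact S := hf.inter_left ((isClosed_singleton).preimage hσc)
  have hSfin : S.Finite := by
    obtain ⟨b, hbS, hbfin, hbcov⟩ := hScomp.elim_finite_subcover_image
      (fun y (_ : y ∈ S) => (e y).open_source)
      (fun z hz => Set.mem_iUnion₂.2 ⟨z, hz, hes z⟩)
    refine Set.Finite.subset (hbfin.biUnion fun y _ => Set.finite_singleton ((e y).symm x)) ?_
    intro z hz
    obtain ⟨y, hy, hzy⟩ := Set.mem_iUnion₂.1 (hbcov hz)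
    refine Set.mem_iUnion₂.2 ⟨y, hy, ?_⟩
    have hzx : (e y) z = x := by rw [← heσ y]; exact hz.1
    simp only [Set.mem_singleton_iff, ← hzx, (e y).left_inv hzy]
  -- pairwise disjoint neighborhoods
  obtain ⟨V₀, hV₀, hV₀d⟩ := hSfin.t2_separation
  set V : U → Set U := fun y => V₀ y ∩ (e y).source with hV
  have hVo : ∀ y, IsOpen (V y) := fun y => ((hV₀ y).2).inter (e y).open_source
  have hVmem : ∀ y, y ∈ V y := fun y => ⟨(hV₀ y).1, hes y⟩
  have hVsub : ∀ y, V y ⊆ (e y).source := fun y => Set.inter_subset_right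
  have hVd : S.PairwiseDisjoint V :=
    hV₀d.mono_on fun y _ => Set.inter_subset_left
  -- the compact garbage set
  set C : Set U := K \ ⋃ y ∈ S, V y with hC
  have hCcomp : IsCompact C := hf.diff (isOpen_biUnion fun y _ => hVo y)
  have hCimg : IsClosed (σ '' C) := (hCcomp.image hσc).isClosed
  -- the neighborhood W of x
  set W : Set X := (σ '' C)ᶜ ∩ ⋂ y ∈ hSfin.toFinset, (e y) '' (V y) with hW
  have hWo : IsOpen W := by
    refine hCimg.isOpen_compl.inter (isOpen_biInter_finset fun y _ => ?_)
    exact (e y).isOpen_image_of_subset_source (hVo y) (hVsub y)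
  have hxW : x ∈ W := by
    constructor
    · intro ⟨z, hzC, hzx⟩
      exact hzC.2 (Set.mem_biUnion ⟨hzx, hzC.1⟩ (hVmem z))
    · refine Set.mem_iInter₂.2 fun y hy => ⟨y, hVmem y, ?_⟩
      rw [← heσ y]
      exact (hSfin.mem_toFinset.1 hy).1
  -- the key singleton identity
  have hsingle : ∀ y, ∀ x' ∈ (e y) '' (V y), σ ⁻¹' {x'} ∩ V y = {(e y).symm x'} := by
    intro y x' hx'
    obtain ⟨w, hwV, hwx⟩ := hx'
    have hws : w ∈ (e y).source := hVsub y hwV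
    apply Set.eq_singleton_iff_unique_mem.2
    constructor
    · have h1 : (e y).symm x' = w := by rw [← hwx, (e y).left_inv hws]
      refine ⟨?_, h1 ▸ hwV⟩
      have : σ ((e y).symm x') = x' := by
        rw [heσ y, h1, hwx]
      simpa [Set.mem_preimage] using this
    · intro z ⟨hz1, hz2⟩
      have : (e y) z = x' := by rw [← heσ y]; exact hz1
      rw [← this, (e y).left_inv (hVsub y hz2)]
  -- the local formula for Lrho on W
  have hkey : ∀ x' ∈ W, Lrho σ ρ f x' =
      ∑ y ∈ hSfin.toFinset, g ((e y).symm x') := by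
    intro x' hx'
    have hx'C : x' ∉ σ '' C := hx'.1
    have hx'V : ∀ y ∈ S, x' ∈ (e y) '' (V y) := fun y hy =>
      Set.mem_iInter₂.1 hx'.2 y (hSfin.mem_toFinset.2 hy)
    by_cases hr : x' ∈ Set.range σ
    · simp only [Lrho, if_pos hr]
      have step1 : ∑ᶠ z ∈ σ ⁻¹' {x'}, g z = ∑ᶠ z ∈ ⋃ y ∈ S, (σ ⁻¹' {x'} ∩ V y), g z := by
        apply finsum_mem_inter_support_eq'
        intro z hz
        constructor
        · intro hzf
          have hzK : z ∈ K := hgsupp hz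
          by_cases hzV : z ∈ ⋃ y ∈ S, V y
          · obtain ⟨y, hy, hzy⟩ := Set.mem_iUnion₂.1 hzV
            exact Set.mem_iUnion₂.2 ⟨y, hy, hzf, hzy⟩
          · exact absurd ⟨z, ⟨hzK, hzV⟩, hzf⟩ hx'C
        · intro hzu
          obtain ⟨y, _, hzy⟩ := Set.mem_iUnion₂.1 hzu
          exact hzy.1
      have step2 : ∑ᶠ z ∈ ⋃ y ∈ S, (σ ⁻¹' {x'} ∩ V y), g z
          = ∑ᶠ y ∈ S, ∑ᶠ z ∈ σ ⁻¹' {x'} ∩ V y, g z := by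
        apply finsum_mem_biUnion
        · exact hVd.mono_on fun y _ => Set.inter_subset_right
        · exact hSfin
        · intro y hy
          rw [hsingle y x' (hx'V y hy)]
          exact Set.finite_singleton _
      have step3 : ∑ᶠ y ∈ S, ∑ᶠ z ∈ σ ⁻¹' {x'} ∩ V y, g z
          = ∑ᶠ y ∈ S, g ((e y).symm x') := by
        apply finsum_mem_congr rfl
        intro y hy
        rw [hsingle y x' (hx'V y hy), finsum_mem_singleton]
      rw [step1, step2, step3, finsum_mem_eq_finite_toFinset_sum _ hSfin]
    · simp only [Lrho, if_neg hr]
      have hSempty : S = ∅ := by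
        rw [Set.eq_empty_iff_forall_notMem]
        intro y hy
        obtain ⟨w, _, hwx⟩ := hx'V y hy
        exact hr ⟨w, by rw [heσ y]; exact hwx⟩
      rw [show hSfin.toFinset = ∅ by simp [hSempty], Finset.sum_empty]
  -- continuity of the local formula
  have hFcont : ContinuousOn (fun x' => ∑ y ∈ hSfin.toFinset, g ((e y).symm x')) W := by
    apply continuousOn_finset_sum
    intro y hy
    have hWsub : W ⊆ (e y).target := by
      intro x' hx'
      have : x' ∈ (e y) '' (V y) := Set.mem_iInter₂.1 hx'.2 y hy
      obtain ⟨w, hwV, hwx⟩ := this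
      rw [← hwx]
      exact (e y).map_source (hVsub y hwV)
    exact hgc.comp_continuousOn ((e y).continuousOn_symm.mono hWsub)
  have hmem : W ∈ nhds x := hWo.mem_nhds hxW
  refine ContinuousAt.congr (hFcont.continuousAt hmem) ?_
  filter_upwards [hmem] with x' hx'
  exact (hkey x' hx').symm
end

section
/- Let X be a compact Hausdorff space, U ⊆ X a clopen subset, and σ : U → X a local homeomorphism. If L : C_c(U) → C(X) is a linear positive map satisfying L(g · (f ∘ σ)) = L(g) · f for all g ∈ C_c(U) and f ∈ C(X), then there exists a continuous nonnegative function ρ ∈ C(U) such that L(f)(x) = Σ_{y ∈ σ⁻¹(x)} ρ(y) f(y) for all x ∈ σ(U) and L(f)(x) = 0 for x ∉ σ(U). -/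
/-!
On a chart `φ` of `σ`, a function `g` supported in the chart factors as `g = e · (F ∘ σ)`, where
`F` is `g ∘ φ⁻¹` extended by zero and `e ≡ 1` on the support of `g`; hence
`L g (σ y) = L e (σ y) · g y`. Multiplying by an Urysohn function on `X` shows that `L g x` only
depends on the germ of `g` along the fibre `σ⁻¹ {x}`, so `ρ y := L e (σ y)` does not depend on
the function `e ≡ 1` near `y` supported in a chart, and is continuous because one `e` serves for
all points near `y`. Gluing such functions over the finite fibre gives `L f x = ∑ ρ y · f y`.
-/

open scoped ComplexOrder
open Set Filter Topology

section

variable {X Y : Type*} [TopologicalSpace X] [TopologicalSpace Y]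

theorem Complex.exists_tsupport_one_of_isOpen_isClosed [R1Space X] {s t : Set X}
    (hs : IsOpen s) (hscp : IsCompact (closure s)) (ht : IsClosed t) (hst : t ⊆ s) :
    ∃ e : C(X, ℂ), tsupport e ⊆ s ∧ EqOn e 1 t ∧ ∀ z, 0 ≤ e z := by
  obtain ⟨e, hes, het, he01⟩ := _root_.exists_tsupport_one_of_isOpen_isClosed hs hscp ht hst
  refine ⟨(ofRealCLM : C(ℝ, ℂ)).comp e, ?_, fun z hz => ?_, fun z => ?_⟩
  · exact (tsupport_comp_subset ofReal_zero e).trans hes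
  · simp [het hz]
  · simpa using (he01 z).1

theorem IsLocalHomeomorph.finite_preimage_singleton [CompactSpace Y] [T1Space X] {f : Y → X}
    (hf : IsLocalHomeomorph f) (x : X) : (f ⁻¹' {x}).Finite :=
  (isClosed_singleton.preimage hf.continuous).isCompact.finite <|
    hf.isLocalHomeomorphOn.isDiscrete_of_image
      ((subsingleton_singleton.anti (image_preimage_subset f {x})).isDiscrete)

theorem OpenPartialHomeomorph.exists_continuousMap_comp_eqOn [T2Space X] {E : Type*}
    [TopologicalSpace E] [Zero E] (φ : OpenPartialHomeomorph Y X) {g : C(Y, E)}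
    (hg : HasCompactSupport g) (hgφ : tsupport g ⊆ φ.source) :
    ∃ F : C(X, E), EqOn (F ∘ φ) g φ.source := by
  set F := φ.target.indicator (g ∘ φ.symm)
  have hK : IsCompact (φ '' tsupport g) := hg.image_of_continuousOn (φ.continuousOn.mono hgφ)
  have hF : tsupport F ⊆ φ '' tsupport g := by
    refine closure_minimal (fun x hx => ?_) hK.isClosed
    rw [Function.mem_support, indicator_apply_ne_zero] at hx
    exact ⟨φ.symm x, subset_tsupport _ hx.2, φ.right_inv hx.1⟩
  have hFcont : Continuous F :=
    ((g.continuous.comp_continuousOn φ.continuousOn_symm).congr fun x hx =>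
      indicator_of_mem hx _).continuous_of_tsupport_subset φ.open_target
      (hF.trans (φ.image_source_eq_target ▸ image_mono hgφ))
  exact ⟨⟨F, hFcont⟩, fun y hy => by simp [F, φ.map_source hy, φ.left_inv hy]⟩

def IsTransferOperator (σ : C(Y, X)) (L : C(Y, ℂ) →ₗ[ℂ] C(X, ℂ)) : Prop :=
  ∀ (g : C(Y, ℂ)) (f : C(X, ℂ)), L (g * f.comp σ) = L g * f

def IsLocalUnitAt (σ : Y → X) (y : Y) (e : C(Y, ℂ)) : Prop :=
  e =ᶠ[𝓝 y] 1 ∧ ∃ φ : OpenPartialHomeomorph Y X, σ = φ ∧ tsupport e ⊆ φ.source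

namespace IsLocalUnitAt

variable {σ : Y → X} {y : Y} {e : C(Y, ℂ)}

theorem mem_tsupport (he : IsLocalUnitAt σ y e) : y ∈ tsupport e :=
  subset_tsupport _ (by simp [he.1.eq_of_nhds])

theorem eventually (he : IsLocalUnitAt σ y e) : ∀ᶠ z in 𝓝 y, IsLocalUnitAt σ z e :=
  he.1.eventuallyEq_nhds.mono fun _ hz => ⟨hz, he.2⟩

theorem eventuallyEq_zero (he : IsLocalUnitAt σ y e) {y' : Y} (hy' : σ y' = σ y)
    (hne : y' ≠ y) : e =ᶠ[𝓝 y'] 0 := by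
  obtain ⟨φ, rfl, hφ⟩ := he.2
  rw [← notMem_tsupport_iff_eventuallyEq]
  exact fun h => hne (φ.injOn (hφ h) (hφ he.mem_tsupport) hy')

end IsLocalUnitAt

theorem exists_isLocalUnitAt [CompactSpace Y] [T2Space Y] {σ : Y → X}
    (hσ : IsLocalHomeomorph σ) (y : Y) : ∃ e, IsLocalUnitAt σ y e ∧ ∀ z, 0 ≤ e z := by
  obtain ⟨φ, hy, hσφ⟩ := hσ y
  obtain ⟨t, ht, htc, htφ⟩ := exists_mem_nhds_isClosed_subset (φ.open_source.mem_nhds hy)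
  obtain ⟨e, heφ, het, he0⟩ := Complex.exists_tsupport_one_of_isOpen_isClosed φ.open_source
    isClosed_closure.isCompact htc htφ
  exact ⟨e, ⟨eventually_of_mem ht het, φ, hσφ, heφ⟩, he0⟩

theorem sum_mul_eventuallyEq_nhdsSet_preimage {σ : Y → X} {x : X} {T : Finset Y}
    (hT : ↑T = σ ⁻¹' {x}) {u : Y → C(Y, ℂ)} (hu : ∀ y ∈ T, IsLocalUnitAt σ y (u y))
    (f : C(Y, ℂ)) : ⇑(∑ y ∈ T, u y * f) =ᶠ[𝓝ˢ (σ ⁻¹' {x})] f := by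
  classical
  rw [← hT]
  refine eventually_nhdsSet_iff_forall.2 fun y hy => ?_
  have hfib : ∀ y ∈ T, σ y = x := fun y hy => (Set.ext_iff.1 hT y).1 hy
  have hzero : ∀ y' ∈ T.erase y, u y' =ᶠ[𝓝 y] 0 := fun y' hy' =>
    (hu y' (Finset.mem_of_mem_erase hy')).eventuallyEq_zero
      ((hfib y hy).trans (hfib y' (Finset.mem_of_mem_erase hy')).symm)
      (Finset.ne_of_mem_erase hy').symm
  filter_upwards [(hu y hy).1, (T.erase y).eventually_all.2 hzero] with z hz1 hz0
  rw [ContinuousMap.coe_sum, Finset.sum_apply, Finset.sum_eq_single_of_mem y hy]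
  · simp [hz1]
  · exact fun y' hy' hne => by simp [hz0 y' (Finset.mem_erase.2 ⟨hne, hy'⟩)]

namespace IsTransferOperator

variable {σ : C(Y, X)} {L : C(Y, ℂ) →ₗ[ℂ] C(X, ℂ)} [CompactSpace Y] [T2Space X]

theorem apply_eq_apply_mul (hL : IsTransferOperator σ L)
    {φ : OpenPartialHomeomorph Y X} (hσφ : ⇑σ = φ) {g e : C(Y, ℂ)}
    (hg : tsupport g ⊆ φ.source) (he : tsupport e ⊆ φ.source) (heg : EqOn e 1 (tsupport g))
    {y : Y} (hy : y ∈ φ.source) : L g (σ y) = L e (σ y) * g y := by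
  obtain ⟨F, hF⟩ := φ.exists_continuousMap_comp_eqOn (isClosed_tsupport g).isCompact hg
  have hgeF : g = e * F.comp σ := by
    ext z
    by_cases hze : z ∈ tsupport e
    · have hFz : F (σ z) = g z := hσφ ▸ hF (he hze)
      by_cases hzg : z ∈ tsupport g
      · simp [hFz, heg hzg]
      · simp [hFz, image_eq_zero_of_notMem_tsupport hzg]
    · have hzg : z ∉ tsupport g := fun h => hze (subset_tsupport _ (by simp [heg h]))
      simp [image_eq_zero_of_notMem_tsupport hze, image_eq_zero_of_notMem_tsupport hzg]
  calc L g (σ y) = (L e * F) (σ y) := by rw [← hL, ← hgeF]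
    _ = L e (σ y) * g y := by rw [ContinuousMap.mul_apply, ← hF hy, hσφ]; rfl

theorem apply_eq_mul_of_tsupport_subset [T2Space Y] (hL : IsTransferOperator σ L) {ρ : Y → ℂ}
    (hρ : ∀ y e, IsLocalUnitAt σ y e → L e (σ y) = ρ y) {φ : OpenPartialHomeomorph Y X}
    (hσφ : ⇑σ = φ) {g : C(Y, ℂ)} (hg : tsupport g ⊆ φ.source) {y : Y}
    (hy : y ∈ φ.source) : L g (σ y) = ρ y * g y := by
  obtain ⟨e, heφ, heg, -⟩ := Complex.exists_tsupport_one_of_isOpen_isClosed φ.open_source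
    isClosed_closure.isCompact (isClosed_tsupport g) hg
  rw [hL.apply_eq_apply_mul hσφ hg heφ heg hy]
  by_cases hgy : g y = 0
  · simp [hgy]
  · have he1 : e =ᶠ[𝓝 y] 1 := eventually_of_mem (g.continuous.isOpen_support.mem_nhds hgy)
      fun z hz => heg (subset_tsupport _ hz)
    rw [hρ y e ⟨he1, φ, hσφ, heφ⟩]

variable [CompactSpace X]

theorem apply_eq_zero_of_eventuallyEq_zero (hL : IsTransferOperator σ L) {g : C(Y, ℂ)} {x : X}
    (hg : g =ᶠ[𝓝ˢ (σ ⁻¹' {x})] 0) : L g x = 0 := by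
  obtain ⟨N, hNo, hxN, hgN⟩ := eventually_nhdsSet_iff_exists.1 hg
  have hK : IsClosed (σ '' Nᶜ) := (hNo.isClosed_compl.isCompact.image σ.continuous).isClosed
  have hxK : {x} ⊆ (σ '' Nᶜ)ᶜ := by
    rintro _ rfl ⟨y, hy, hyx⟩
    exact hy (hxN hyx)
  obtain ⟨f, hfK, hfx, -⟩ := Complex.exists_tsupport_one_of_isOpen_isClosed hK.isOpen_compl
    isClosed_closure.isCompact isClosed_singleton hxK
  have hgf : g * f.comp σ = 0 := by
    ext y
    by_cases hy : y ∈ N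
    · simp [hgN y hy]
    · have : σ y ∉ tsupport f := fun h => hfK h ⟨y, hy, rfl⟩
      simp [image_eq_zero_of_notMem_tsupport this]
  simpa [hgf, hfx rfl] using congr($(hL g f) x).symm

theorem apply_eq_of_eventuallyEq (hL : IsTransferOperator σ L) {g₁ g₂ : C(Y, ℂ)} {x : X}
    (hg : g₁ =ᶠ[𝓝ˢ (σ ⁻¹' {x})] g₂) : L g₁ x = L g₂ x := by
  rw [← sub_eq_zero, ← ContinuousMap.sub_apply, ← map_sub]
  exact hL.apply_eq_zero_of_eventuallyEq_zero (hg.mono fun _ h => by simp [h])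

theorem apply_eq_of_isLocalUnitAt (hL : IsTransferOperator σ L) {y : Y} {e₁ e₂ : C(Y, ℂ)}
    (h₁ : IsLocalUnitAt σ y e₁) (h₂ : IsLocalUnitAt σ y e₂) : L e₁ (σ y) = L e₂ (σ y) := by
  refine hL.apply_eq_of_eventuallyEq (eventually_nhdsSet_iff_forall.2 fun y' hy' => ?_)
  by_cases hne : y' = y
  · subst hne
    exact h₁.1.trans h₂.1.symm
  · exact (h₁.eventuallyEq_zero hy' hne).trans (h₂.eventuallyEq_zero hy' hne).symm

variable [T2Space Y]

theorem exists_density (hL : IsTransferOperator σ L) (hσ : IsLocalHomeomorph σ)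
    (hpos : ∀ f : C(Y, ℂ), (∀ y, 0 ≤ f y) → ∀ x, 0 ≤ L f x) :
    ∃ ρ : C(Y, ℝ), (∀ y, 0 ≤ ρ y) ∧ ∀ y e, IsLocalUnitAt σ y e → L e (σ y) = ρ y := by
  choose u hu hu0 using exists_isLocalUnitAt hσ
  have hρ : ∀ y e, IsLocalUnitAt σ y e → L e (σ y) = (L (u y) (σ y)).re := fun y e he => by
    rw [hL.apply_eq_of_isLocalUnitAt he (hu y)]
    exact Complex.eq_re_of_ofReal_le (r := 0) (by simpa using hpos _ (hu0 y) (σ y))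
  have hcont : Continuous fun y => (L (u y) (σ y)).re :=
    continuous_iff_continuousAt.2 fun y₀ =>
      (Complex.continuous_re.comp ((L (u y₀)).continuous.comp σ.continuous)).continuousAt.congr
        ((hu y₀).eventually.mono fun y hy => by simp [hρ y _ hy])
  exact ⟨⟨_, hcont⟩, fun y => (Complex.nonneg_iff.1 (hpos _ (hu0 y) (σ y))).1, hρ⟩

theorem apply_eq_finsum (hL : IsTransferOperator σ L) (hσ : IsLocalHomeomorph σ) {ρ : Y → ℂ}
    (hρ : ∀ y e, IsLocalUnitAt σ y e → L e (σ y) = ρ y) (f : C(Y, ℂ)) (x : X) :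
    L f x = ∑ᶠ y ∈ σ ⁻¹' {x}, ρ y * f y := by
  have hfin := hσ.finite_preimage_singleton x
  choose u hu _ using exists_isLocalUnitAt hσ
  have hterm : ∀ y ∈ hfin.toFinset, L (u y * f) x = ρ y * f y := fun y hy => by
    obtain ⟨hu1, φ, hσφ, huφ⟩ := hu y
    rw [← hfin.mem_toFinset.1 hy, hL.apply_eq_mul_of_tsupport_subset hρ hσφ
      ((tsupport_mul_subset_left (f := u y) (g := f)).trans huφ)
      (huφ (hu y).mem_tsupport)]
    simp [hu1.eq_of_nhds]
  calc L f x = L (∑ y ∈ hfin.toFinset, u y * f) x :=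
        (hL.apply_eq_of_eventuallyEq
          (sum_mul_eventuallyEq_nhdsSet_preimage hfin.coe_toFinset (fun y _ => hu y) f)).symm
    _ = ∑ y ∈ hfin.toFinset, ρ y * f y := by
        rw [map_sum, ContinuousMap.coe_sum, Finset.sum_apply]
        exact Finset.sum_congr rfl hterm
    _ = ∑ᶠ y ∈ σ ⁻¹' {x}, ρ y * f y := by
        rw [← finsum_mem_coe_finset, hfin.coe_toFinset]

end IsTransferOperator

end

/-- every transfer operator `L : C_c(U) → C(X)` for `α(f) = f ∘ σ`
(with `U` clopen in the compact Hausdorff space `X`, so `C_c(U) = C(U)`) is of the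
form `L_ρ` for some nonnegative continuous `ρ` on `U`. -/
theorem transfer_operator_eq_Lrho {X : Type*} [TopologicalSpace X] [CompactSpace X]
    [T2Space X] (U : Set X) (hU : IsClopen U) (σ : U → X) (hσ : IsLocalHomeomorph σ)
    (L : C(U, ℂ) →ₗ[ℂ] C(X, ℂ))
    (hpos : ∀ f : C(U, ℂ), (∀ y, 0 ≤ f y) → ∀ x, 0 ≤ L f x)
    (htrans : ∀ (g : C(U, ℂ)) (f : C(X, ℂ)) (h : C(U, ℂ)),
      (∀ y, h y = g y * f (σ y)) → ∀ x, L h x = L g x * f x) :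
    ∃ ρ : C(U, ℝ), (∀ y, 0 ≤ ρ y) ∧
      ∀ (f : C(U, ℂ)) (x : X),
        (x ∈ Set.range σ → L f x = ∑ᶠ y ∈ σ ⁻¹' {x}, (ρ y : ℂ) * f y) ∧
        (x ∉ Set.range σ → L f x = 0) := by
  have : CompactSpace U := isCompact_iff_compactSpace.1 hU.isClosed.isCompact
  have hL : IsTransferOperator ⟨σ, hσ.continuous⟩ L := fun g f =>
    ContinuousMap.ext (htrans g f _ fun _ => rfl)
  obtain ⟨ρ, hρ0, hρ⟩ := hL.exists_density hσ hpos
  refine ⟨ρ, hρ0, fun f x => ⟨fun _ => hL.apply_eq_finsum hσ hρ f x, fun hx => ?_⟩⟩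
  rw [hL.apply_eq_finsum hσ hρ f x, ContinuousMap.coe_mk, preimage_singleton_eq_empty.2 hx,
    finsum_mem_empty]
end

section
/- Let A be an n × n {0,1}-matrix whose directed graph Gr(A) is transitive and not a cycle (i.e., some vertex has at least two outgoing edges). Then the one-sided subshift (X_A, σ_A) is topologically free: for all natural numbers i ≠ j, the closure of the set V^{i,j} = {x ∈ X_A : σ_A^i(x) = σ_A^j(x)} has empty interior. -/
/-- The one-sided subshift of finite type of a `{0,1}`-matrix `A`. -/
def ShiftSpace (n : ℕ) (A : Fin n → Fin n → ℕ) : Set (ℕ → Fin n) :=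
  {x | ∀ i, A (x i) (x (i + 1)) = 1}

/-- The one-sided shift map on `X_A`. -/
def shiftMap (n : ℕ) (A : Fin n → Fin n → ℕ) :
    ShiftSpace n A → ShiftSpace n A :=
  fun x => ⟨fun i => x.1 (i + 1), fun i => x.2 (i + 1)⟩

/-- The directed graph of `A` is transitive. -/
def GraphTransitive (n : ℕ) (A : Fin n → Fin n → ℕ) : Prop :=
  ∀ i j : Fin n, ∃ w : List (Fin n), w.Chain' (fun a b => A a b = 1) ∧
    w.head? = some i ∧ w.getLast? = some j

/-- `Gr(A)` is not a cycle: some vertex has at least two outgoing edges. -/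
def NotACycle (n : ℕ) (A : Fin n → Fin n → ℕ) : Prop :=
  ∃ i j k : Fin n, j ≠ k ∧ A i j = 1 ∧ A i k = 1

/-!
A point `x` with `σ^i x = σ^j x`, `i < j`, satisfies `x (k + i) = x (k + j)` for all `k`, so it is
determined by its first `j` coordinates; hence `{x | σ^i x = σ^j x}` is finite, in particular
closed. On the other hand `X_A` has no isolated points: by transitivity every vertex reaches the
branching vertex, and from there two different infinite walks start, so every cylinder around a
point of `X_A` contains a second point of `X_A`. A finite set in a T₁ space without isolated points
has empty interior.
-/

open Relation PiNat

section InfiniteWalks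

variable {α : Type*} {R : α → α → Prop}

def infiniteWalks (R : α → α → Prop) : Set (ℕ → α) :=
  {x | ∀ k, R (x k) (x (k + 1))}

theorem cons_mem_infiniteWalks {u : α} {x : ℕ → α} (hx : x ∈ infiniteWalks R)
    (hu : R u (x 0)) : Stream'.cons u x ∈ infiniteWalks R
  | 0 => hu
  | k + 1 => hx k

theorem exists_mem_infiniteWalks_of_reflTransGen {u : α} {x : ℕ → α}
    (hx : x ∈ infiniteWalks R) (hux : ReflTransGen R u (x 0)) :
    ∃ y ∈ infiniteWalks R, y 0 = u := by
  induction hux using ReflTransGen.head_induction_on with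
  | refl => exact ⟨x, hx, rfl⟩
  | head huv _ ih =>
    obtain ⟨y, hy, rfl⟩ := ih
    exact ⟨_, cons_mem_infiniteWalks hy huv, rfl⟩

theorem exists_two_infiniteWalks (hR : ∀ u v, ReflTransGen R u v)
    (hbranch : ∃ a b c, b ≠ c ∧ R a b ∧ R a c) {x : ℕ → α} (hx : x ∈ infiniteWalks R)
    (u : α) : ∃ y ∈ infiniteWalks R, ∃ y' ∈ infiniteWalks R, y 0 = u ∧ y' 0 = u ∧ y ≠ y' := by
  obtain ⟨a, b, c, hbc, hab, hac⟩ := hbranch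
  obtain ⟨y, hy, rfl⟩ := exists_mem_infiniteWalks_of_reflTransGen hx (hR b (x 0))
  obtain ⟨y', hy', rfl⟩ := exists_mem_infiniteWalks_of_reflTransGen hx (hR c (x 0))
  induction hR u a using ReflTransGen.head_induction_on with
  | refl =>
    refine ⟨_, cons_mem_infiniteWalks hy hab, _, cons_mem_infiniteWalks hy' hac, rfl, rfl, ?_⟩
    exact fun h => hbc (congrFun h 1)
  | head huv _ ih =>
    obtain ⟨z, hz, z', hz', rfl, hzz', hne⟩ := ih
    refine ⟨_, cons_mem_infiniteWalks hz huv, _, cons_mem_infiniteWalks hz' (hzz' ▸ huv),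
      rfl, rfl, ?_⟩
    exact fun h => hne (funext fun k => congrFun h (k + 1))

theorem exists_ne_mem_cylinder_of_two_infiniteWalks
    (htwo : ∀ u, ∃ y ∈ infiniteWalks R, ∃ y' ∈ infiniteWalks R, y 0 = u ∧ y' 0 = u ∧ y ≠ y')
    (N : ℕ) {x : ℕ → α} (hx : x ∈ infiniteWalks R) :
    ∃ y ∈ infiniteWalks R, y ∈ cylinder x (N + 1) ∧ y ≠ x := by
  induction N generalizing x with
  | zero =>
    obtain ⟨y, hy, y', hy', hy0, hy'0, hne⟩ := htwo (x 0)
    by_cases hyx : y = x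
    · exact ⟨y', hy', by simp [mem_cylinder_iff, hy'0], fun h => hne (hyx.trans h.symm)⟩
    · exact ⟨y, hy, by simp [mem_cylinder_iff, hy0], hyx⟩
  | succ N ih =>
    obtain ⟨y, hy, hyx, hne⟩ := ih (x := fun k => x (k + 1)) fun k => hx (k + 1)
    have hy0 : y 0 = x 1 := hyx 0 N.succ_pos
    refine ⟨Stream'.cons (x 0) y, cons_mem_infiniteWalks hy (hy0 ▸ hx 0), ?_, ?_⟩
    · rintro (_ | k) hk
      · rfl
      · exact hyx k (by omega)
    · exact fun h => hne (funext fun k => congrFun h (k + 1))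

theorem perfectSpace_infiniteWalks [TopologicalSpace α] [DiscreteTopology α]
    (hR : ∀ u v, ReflTransGen R u v) (hbranch : ∃ a b c, b ≠ c ∧ R a b ∧ R a c) :
    PerfectSpace (infiniteWalks R) := by
  refine ⟨fun x _ => accPt_iff_nhds.2 fun U hU => ?_⟩
  obtain ⟨V, hV, hVU⟩ := (mem_nhds_subtype _ _ _).1 hU
  obtain ⟨_, ⟨z, N, rfl⟩, hxz, hzV⟩ := (isTopologicalBasis_cylinders _).mem_nhds_iff.1 hV
  obtain ⟨y, hy, hyx, hne⟩ := exists_ne_mem_cylinder_of_two_infiniteWalks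
    (exists_two_infiniteWalks hR hbranch x.2) N x.2
  refine ⟨⟨y, hy⟩, ⟨hVU (hzV ?_), trivial⟩, fun h => hne (congrArg Subtype.val h)⟩
  rw [← mem_cylinder_iff_eq.1 hxz]
  exact cylinder_anti _ N.le_succ hyx

end InfiniteWalks

theorem eq_of_forall_add_eq_add_of_forall_lt {α : Type*} {x y : ℕ → α} {i j : ℕ} (hij : i < j)
    (hx : ∀ k, x (k + i) = x (k + j)) (hy : ∀ k, y (k + i) = y (k + j))
    (hxy : ∀ k < j, x k = y k) : x = y := by
  funext m
  induction m using Nat.strong_induction_on with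
  | _ m ih =>
    by_cases hm : m < j
    · exact hxy m hm
    · obtain ⟨k, rfl⟩ : ∃ k, m = k + j := ⟨m - j, by omega⟩
      rw [← hx, ← hy]
      exact ih _ (by omega)

section ShiftSpace

variable {n : ℕ} {A : Fin n → Fin n → ℕ}

theorem GraphTransitive.reflTransGen (h : GraphTransitive n A) (u v : Fin n) :
    ReflTransGen (fun a b => A a b = 1) u v := by
  obtain ⟨w, hw, hu, hv⟩ := h u v
  obtain ⟨t, rfl⟩ := List.head?_eq_some_iff.1 hu
  exact List.relationReflTransGen_of_exists_isChain_cons t hw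
    (Option.some_inj.1 ((List.getLast?_eq_some_getLast _).symm.trans hv))

theorem shiftMap_iterate_apply (m : ℕ) (x : ShiftSpace n A) (k : ℕ) :
    ((shiftMap n A)^[m] x).1 k = x.1 (k + m) := by
  induction m generalizing x with
  | zero => rfl
  | succ m ih => rw [Function.iterate_succ_apply, ih]; rfl

theorem finite_setOf_iterate_shiftMap_eq {i j : ℕ} (hij : i < j) :
    {x : ShiftSpace n A | (shiftMap n A)^[i] x = (shiftMap n A)^[j] x}.Finite := by
  refine Set.Finite.of_finite_image (f := fun x k => x.1 (k : Fin j)) (Set.toFinite _) ?_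
  intro x hx y hy hxy
  have hper {z : ShiftSpace n A} (hz : (shiftMap n A)^[i] z = (shiftMap n A)^[j] z) (k : ℕ) :
      z.1 (k + i) = z.1 (k + j) := by
    rw [← shiftMap_iterate_apply, hz, shiftMap_iterate_apply]
  exact Subtype.ext <| eq_of_forall_add_eq_add_of_forall_lt hij (hper hx) (hper hy)
    fun k hk => congrFun hxy ⟨k, hk⟩

end ShiftSpace

theorem one_sided_topologically_free_general (n : ℕ) (A : Fin n → Fin n → ℕ)
    (htrans : GraphTransitive n A)
    (hnc : NotACycle n A) :
    ∀ i j : ℕ, i ≠ j →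
      interior (closure {x : ShiftSpace n A |
        (shiftMap n A)^[i] x = (shiftMap n A)^[j] x}) = ∅ := by
  intro i j hij
  wlog hlt : i < j generalizing i j
  · simpa only [eq_comm] using this j i hij.symm (by omega)
  have : PerfectSpace (ShiftSpace n A) := perfectSpace_infiniteWalks htrans.reflTransGen hnc
  have hfin := finite_setOf_iterate_shiftMap_eq (A := A) hlt
  rw [hfin.isClosed.closure_eq, interior_eq_empty_iff_dense_compl, Set.compl_eq_univ_sdiff]
  exact dense_univ.sdiff_finite hfin

/-- if `Gr(A)` is transitive and not a cycle, then `(X_A, σ_A)` is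
topologically free: for `i ≠ j` the closure of `{x : σ_A^i x = σ_A^j x}` has empty
interior. -/
theorem one_sided_topologically_free (n : ℕ) (A : Fin n → Fin n → ℕ)
    (hA : ∀ i j, A i j = 0 ∨ A i j = 1) (htrans : GraphTransitive n A)
    (hnc : NotACycle n A) :
    ∀ i j : ℕ, i ≠ j →
      interior (closure {x : ShiftSpace n A |
        (shiftMap n A)^[i] x = (shiftMap n A)^[j] x}) = ∅ :=
  one_sided_topologically_free_general n A htrans hnc
end

section
/- Let X be a compact Hausdorff space, U ⊆ X clopen, σ : U → X continuous with σ(U) open. Define X̃ ⊆ ∏_{i=0}^∞ (X ⊔ {0}) as the union of X_N = {(x_0,...,x_N,0,0,...) : σ(x_i) = x_{i-1} for 1 ≤ i ≤ N, x_N ∉ σ(U)} over N ≥ 0 together with X_∞ = {(x_0,x_1,...) : σ(x_i) = x_{i-1} for all i ≥ 1}, with the subspace topology from the product topology on ∏ (X ⊔ {0}) where {0} is an added isolated point. Then X̃ is compact. -/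
/-! A sequence `y` lies in `X̃` exactly when `y 0 ∈ X` and every consecutive pair `(y i, y (i+1))`
lies in the relation `{(σ u, u)} ∪ {(x, 0) : x ∉ σ(U)} ∪ {(0, 0)}`. This relation is a union of
continuous images of the compact sets `U`, `X ∖ σ(U)` and a point, hence closed; so `X̃` is closed
in the compact space `(X ⊔ {0})^ℕ`. -/

/-- The `σ`-extension `X̃` of a partial dynamical system `σ : U → X`: sequences in
`(X ⊔ {0})^ℕ` (here `0` is the extra point `Sum.inr ()`) which either consist of a
finite chain `(x₀,...,x_N, 0, 0, ...)` with `x_i ∈ U`, `σ(x_i) = x_{i-1}` for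
`1 ≤ i ≤ N` and `x_N ∉ σ(U)`, or of an infinite chain `(x₀, x₁, ...)` with
`σ(x_i) = x_{i-1}` for all `i ≥ 1`. -/
def SigmaExt {X : Type*} (U : Set X) (σ : U → X) : Set (ℕ → X ⊕ Unit) :=
  {y | (∃ N : ℕ,
          (∀ i : ℕ, 1 ≤ i → i ≤ N →
            ∃ u : U, y i = Sum.inl (u : X) ∧ y (i - 1) = Sum.inl (σ u)) ∧
          (∃ xN : X, y N = Sum.inl xN ∧ xN ∉ Set.range σ) ∧
          (∀ i : ℕ, N < i → y i = Sum.inr ()))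
      ∨ (∀ i : ℕ, 1 ≤ i →
          ∃ u : U, y i = Sum.inl (u : X) ∧ y (i - 1) = Sum.inl (σ u))}

open Set Sum

theorem isClosed_setOf_forall_mem_succ {α : Type*} [TopologicalSpace α] {T : Set (α × α)}
    (hT : IsClosed T) : IsClosed {y : ℕ → α | ∀ i, (y i, y (i + 1)) ∈ T} := by
  simp only [ofPred_forall]
  exact isClosed_iInter fun i => hT.preimage (by fun_prop)

section

variable {X : Type*} (U : Set X) (σ : U → X)

def sigmaExtStep : Set ((X ⊕ Unit) × (X ⊕ Unit)) :=
  range (fun u : U => (inl (σ u), inl (u : X))) ∪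
    (fun x => (inl x, inr ())) '' (range σ)ᶜ ∪ {(inr (), inr ())}

variable {U σ}

@[simp]
theorem mk_inl_mem_sigmaExtStep {p : X ⊕ Unit} {x : X} :
    (p, inl x) ∈ sigmaExtStep U σ ↔ ∃ u : U, (u : X) = x ∧ p = inl (σ u) := by
  simp [sigmaExtStep, eq_comm]

@[simp]
theorem mk_inl_inr_mem_sigmaExtStep {x : X} :
    (inl x, inr ()) ∈ sigmaExtStep U σ ↔ x ∉ range σ := by
  simp [sigmaExtStep]

@[simp]
theorem mk_inr_mem_sigmaExtStep {q : X ⊕ Unit} :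
    (inr (), q) ∈ sigmaExtStep U σ ↔ q = inr () := by
  simp [sigmaExtStep]

theorem isClosed_sigmaExtStep [TopologicalSpace X] [CompactSpace X] [T2Space X]
    (hU : IsClosed U) (hσ : Continuous σ) (hopen : IsOpen (range σ)) :
    IsClosed (sigmaExtStep U σ) := by
  have : CompactSpace U := isCompact_iff_compactSpace.mp hU.isCompact
  refine (IsCompact.isClosed ?_).union isClosed_singleton
  exact (isCompact_range (by fun_prop)).union
    (hopen.isClosed_compl.isCompact.image (by fun_prop))

theorem mem_sigmaExtStep_and_isLeft_iff {p q : X ⊕ Unit} :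
    (p, q) ∈ sigmaExtStep U σ ∧ q.isLeft ↔ ∃ u : U, q = inl (u : X) ∧ p = inl (σ u) := by
  cases q with
  | inl x => simp [eq_comm]
  | inr _ => simp

theorem sigmaExt_subset_setOf_forall_mem_sigmaExtStep :
    SigmaExt U σ ⊆ {y | (y 0).isLeft} ∩ {y | ∀ i, (y i, y (i + 1)) ∈ sigmaExtStep U σ} := by
  rintro y (⟨N, hlink, ⟨xN, hyN, hxN⟩, htail⟩ | hlink)
  · refine ⟨?_, fun i => ?_⟩
    · cases N with
      | zero => simp [hyN]
      | succ N => obtain ⟨u, -, h⟩ := hlink 1 le_rfl (by omega); simp [h]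
    · rcases lt_trichotomy i N with hi | rfl | hi
      · exact (mem_sigmaExtStep_and_isLeft_iff.mpr (hlink (i + 1) (by omega) hi)).1
      · simpa [hyN, htail (i + 1) (by omega)] using hxN
      · simp [htail i hi, htail (i + 1) (by omega)]
  · obtain ⟨u, -, h⟩ := hlink 1 le_rfl
    refine ⟨by simp [h], fun i => ?_⟩
    exact (mem_sigmaExtStep_and_isLeft_iff.mpr (hlink (i + 1) (by omega))).1

theorem setOf_forall_mem_sigmaExtStep_subset_sigmaExt :
    {y | (y 0).isLeft} ∩ {y | ∀ i, (y i, y (i + 1)) ∈ sigmaExtStep U σ} ⊆ SigmaExt U σ := by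
  rintro y ⟨hy0, hstep⟩
  have hlink : ∀ i, 1 ≤ i → (y i).isLeft →
      ∃ u : U, y i = inl (u : X) ∧ y (i - 1) = inl (σ u) := by
    intro i hi hleft
    obtain ⟨j, rfl⟩ := Nat.exists_eq_add_of_le' hi
    exact mem_sigmaExtStep_and_isLeft_iff.mp ⟨hstep j, hleft⟩
  classical
  by_cases hN : ∃ n, ¬(y (n + 1)).isLeft
  · left
    -- `N + 1` is the first index at which `y` leaves `X`.
    obtain ⟨N, hNspec, hNmin⟩ : ∃ N, ¬(y (N + 1)).isLeft ∧ ∀ m < N, (y (m + 1)).isLeft :=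
      ⟨Nat.find hN, Nat.find_spec hN, fun m hm => by simpa using Nat.find_min hN hm⟩
    have hleft : ∀ i ≤ N, (y i).isLeft := by
      rintro (_ | j) hj
      · exact hy0
      · exact hNmin j (by omega)
    have htail : ∀ i, N < i → y i = inr () := by
      intro i hi
      induction i, hi using Nat.le_induction with
      | base =>
        obtain ⟨⟨⟩, h⟩ := Sum.isRight_iff.mp (by simpa using hNspec)
        exact h
      | succ i _ ih => simpa [ih] using hstep i
    refine ⟨N, fun i hi hiN => hlink i hi (hleft i hiN), ?_, htail⟩
    obtain ⟨x, hx⟩ := Sum.isLeft_iff.mp (hleft N le_rfl)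
    refine ⟨x, hx, ?_⟩
    simpa [hx, htail (N + 1) (by omega)] using hstep N
  · simp only [not_exists, not_not] at hN
    right
    intro i hi
    obtain ⟨j, rfl⟩ := Nat.exists_eq_add_of_le' hi
    exact hlink (j + 1) hi (hN j)

theorem sigmaExt_eq_setOf_forall_mem_sigmaExtStep :
    SigmaExt U σ = {y | (y 0).isLeft} ∩ {y | ∀ i, (y i, y (i + 1)) ∈ sigmaExtStep U σ} :=
  sigmaExt_subset_setOf_forall_mem_sigmaExtStep.antisymm
    setOf_forall_mem_sigmaExtStep_subset_sigmaExt

end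

/-- for `X` compact Hausdorff, `U ⊆ X` clopen and `σ : U → X`
continuous with `σ(U)` open, the `σ`-extension `X̃` is compact (in the product
topology of `(X ⊔ {0})^ℕ`). -/
theorem sigmaExt_isCompact {X : Type*} [TopologicalSpace X] [CompactSpace X]
    [T2Space X] (U : Set X) (hU : IsClopen U) (σ : U → X) (hσ : Continuous σ)
    (hopen : IsOpen (Set.range σ)) :
    IsCompact (SigmaExt U σ) := by
  rw [sigmaExt_eq_setOf_forall_mem_sigmaExtStep]
  have hstart : IsClosed {y : ℕ → X ⊕ Unit | (y 0).isLeft} :=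
    isClosed_eq (continuous_isLeft.comp (continuous_apply 0)) continuous_const
  exact (hstart.inter (isClosed_setOf_forall_mem_succ
    (isClosed_sigmaExtStep hU.isClosed hσ hopen))).isCompact
end

section
/- Let X be a compact Hausdorff space, U ⊆ X clopen, and σ : U → X continuous and injective with σ(U) open. Then the map Φ : X̃ → X, Φ(x_0, x_1, ...) = x_0, from the σ-extension X̃ to X is a homeomorphism. -/
open Function Set Topology

theorem Topology.IsOpenEmbedding.continuous_extend {α β γ : Type*} [TopologicalSpace α]
    [TopologicalSpace β] [TopologicalSpace γ] {f : α → β} {g : α → γ} {e' : β → γ}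
    (hf : IsOpenEmbedding f) (hf' : IsClosed (range f)) (hg : Continuous g)
    (he' : Continuous e') : Continuous (extend f g e') := by
  refine continuous_iff_continuousAt.2 fun b => ?_
  by_cases hb : b ∈ range f
  · obtain ⟨a, rfl⟩ := hb
    rw [← hf.continuousAt_iff, extend_comp hf.injective]
    exact hg.continuousAt
  · refine he'.continuousAt.congr ?_
    filter_upwards [hf'.isOpen_compl.mem_nhds hb] with b' hb'
    exact (extend_apply' g e' b' hb').symm

namespace SigmaExt

variable {X : Type*} {U : Set X} {σ : U → X}

noncomputable def backStep (σ : U → X) : X ⊕ Unit → X ⊕ Unit :=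
  Sum.elim (extend σ (Sum.inl ∘ Subtype.val) fun _ => Sum.inr ()) fun _ => Sum.inr ()

noncomputable def backOrbit (σ : U → X) (x : X) (i : ℕ) : X ⊕ Unit :=
  (backStep σ)^[i] (Sum.inl x)

theorem backStep_inr (a : Unit) : backStep σ (Sum.inr a) = Sum.inr () := rfl

theorem backStep_inl_apply (hinj : Injective σ) (u : U) :
    backStep σ (Sum.inl (σ u)) = Sum.inl (u : X) :=
  hinj.extend_apply (Sum.inl ∘ Subtype.val) (fun _ => Sum.inr ()) u

theorem backStep_inl_of_notMem {x : X} (hx : x ∉ range σ) :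
    backStep σ (Sum.inl x) = Sum.inr () :=
  extend_apply' (Sum.inl ∘ Subtype.val) (fun _ => Sum.inr ()) x hx

theorem exists_of_backStep_eq_inl (hinj : Injective σ) {a : X ⊕ Unit} {z : X}
    (h : backStep σ a = Sum.inl z) :
    ∃ u : U, backStep σ a = Sum.inl (u : X) ∧ a = Sum.inl (σ u) := by
  rcases a with x | a
  · by_cases hx : x ∈ range σ
    · obtain ⟨u, rfl⟩ := hx
      exact ⟨u, backStep_inl_apply hinj u, rfl⟩
    · rw [backStep_inl_of_notMem hx] at h
      cases h
  · cases h

theorem backOrbit_zero (x : X) : backOrbit σ x 0 = Sum.inl x := rfl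

theorem backOrbit_succ (x : X) (i : ℕ) :
    backOrbit σ x (i + 1) = backStep σ (backOrbit σ x i) :=
  iterate_succ_apply' _ _ _

theorem backOrbit_add_of_eq_inr {x : X} {i : ℕ} (h : backOrbit σ x i = Sum.inr ()) (j : ℕ) :
    backOrbit σ x (i + j) = Sum.inr () := by
  unfold backOrbit at h ⊢
  rw [add_comm, iterate_add_apply, h, iterate_fixed (backStep_inr ())]

theorem backOrbit_injective : Injective (backOrbit σ) :=
  fun _ _ h => Sum.inl_injective (congrFun h 0)

theorem backOrbit_mem (hinj : Injective σ) (x : X) : backOrbit σ x ∈ SigmaExt U σ := by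
  have link : ∀ i, 1 ≤ i → (∃ z, backOrbit σ x i = Sum.inl z) →
      ∃ u : U, backOrbit σ x i = Sum.inl (u : X) ∧ backOrbit σ x (i - 1) = Sum.inl (σ u) := by
    rintro (_ | i) hi ⟨z, hz⟩
    · omega
    · rw [backOrbit_succ] at hz ⊢
      exact exists_of_backStep_eq_inl hinj hz
  have isLeft_of_ne {a : X ⊕ Unit} (h : a ≠ Sum.inr ()) : ∃ z, a = Sum.inl z := by
    rcases a with z | ⟨⟩
    exacts [⟨z, rfl⟩, absurd rfl h]
  classical
  by_cases hdies : ∃ i, backOrbit σ x (i + 1) = Sum.inr ()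
  · set N := Nat.find hdies
    have hN : backOrbit σ x (N + 1) = Sum.inr () := Nat.find_spec hdies
    have alive : ∀ i ≤ N, ∃ z, backOrbit σ x i = Sum.inl z := by
      rintro (_ | i) hi
      · exact ⟨x, rfl⟩
      · exact isLeft_of_ne (Nat.find_min hdies hi)
    refine Or.inl ⟨N, fun i hi hiN => link i hi (alive i hiN), ?_, fun i hi => ?_⟩
    · obtain ⟨xN, hxN⟩ := alive N le_rfl
      refine ⟨xN, hxN, ?_⟩
      rintro ⟨u, rfl⟩
      rw [backOrbit_succ, hxN, backStep_inl_apply hinj] at hN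
      cases hN
    · obtain ⟨j, rfl⟩ := Nat.exists_eq_add_of_le hi
      exact backOrbit_add_of_eq_inr hN j
  · push Not at hdies
    refine Or.inr fun i hi => link i hi ?_
    obtain ⟨j, rfl⟩ := Nat.exists_eq_add_of_le' hi
    exact isLeft_of_ne (hdies j)

theorem exists_apply_zero_eq_inl {y : ℕ → X ⊕ Unit} (hy : y ∈ SigmaExt U σ) :
    ∃ x, y 0 = Sum.inl x := by
  rcases hy with ⟨_ | N, hchain, ⟨xN, hxN, -⟩, -⟩ | hchain
  · exact ⟨xN, hxN⟩
  · obtain ⟨u, -, hu⟩ := hchain 1 le_rfl (by omega)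
    exact ⟨σ u, hu⟩
  · obtain ⟨u, -, hu⟩ := hchain 1 le_rfl
    exact ⟨σ u, hu⟩

theorem apply_succ_eq_backStep (hinj : Injective σ) {y : ℕ → X ⊕ Unit}
    (hy : y ∈ SigmaExt U σ) (i : ℕ) : y (i + 1) = backStep σ (y i) := by
  have of_link : (∃ u : U, y (i + 1) = Sum.inl (u : X) ∧ y (i + 1 - 1) = Sum.inl (σ u)) →
      y (i + 1) = backStep σ (y i) := by
    rintro ⟨u, hu, hu'⟩
    rw [hu, show y i = _ from hu', backStep_inl_apply hinj]
  rcases hy with ⟨N, hchain, ⟨xN, hxN, hxN'⟩, hdead⟩ | hchain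
  · rcases lt_trichotomy i N with hi | rfl | hi
    · exact of_link (hchain (i + 1) (by omega) hi)
    · rw [hdead _ (Nat.lt_succ_self i), hxN, backStep_inl_of_notMem hxN']
    · rw [hdead _ (by omega), hdead _ hi, backStep_inr]
  · exact of_link (hchain (i + 1) (by omega))

theorem range_backOrbit (hinj : Injective σ) : range (backOrbit σ) = SigmaExt U σ := by
  refine Subset.antisymm (range_subset_iff.2 (backOrbit_mem hinj)) fun y hy => ?_
  obtain ⟨x, hx⟩ := exists_apply_zero_eq_inl hy
  refine ⟨x, funext fun i => ?_⟩
  induction i with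
  | zero => exact hx.symm
  | succ i ih => rw [backOrbit_succ, ih, apply_succ_eq_backStep hinj hy]

variable [TopologicalSpace X]

theorem continuous_backStep [CompactSpace X] [T2Space X] (hU : IsClosed U) (hσ : Continuous σ)
    (hopen : IsOpen (range σ)) (hinj : Injective σ) : Continuous (backStep σ) := by
  have : CompactSpace U := isCompact_iff_compactSpace.mp hU.isCompact
  have hemb := hσ.isClosedEmbedding hinj
  exact (IsOpenEmbedding.continuous_extend ⟨hemb.isEmbedding, hopen⟩ hemb.isClosed_range
    (continuous_inl.comp continuous_subtype_val) continuous_const).sumElim continuous_const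

theorem continuous_backOrbit (h : Continuous (backStep σ)) : Continuous (backOrbit σ) :=
  continuous_pi fun i => (h.iterate i).comp continuous_inl

end SigmaExt

open SigmaExt in
/-- if `σ : U → X` is moreover injective, then
`Φ : X̃ → X`, `Φ(x₀, x₁, ...) = x₀`, is a homeomorphism. -/
theorem sigmaExt_proj_homeomorph_of_injective {X : Type*} [TopologicalSpace X]
    [CompactSpace X] [T2Space X] (U : Set X) (hU : IsClopen U) (σ : U → X)
    (hσ : Continuous σ) (hopen : IsOpen (Set.range σ))
    (hinj : Function.Injective σ) :
    ∃ e : SigmaExt U σ ≃ₜ X, ∀ y : SigmaExt U σ, Sum.inl (e y) = y.1 0 := by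
  have hemb : IsEmbedding (backOrbit σ) :=
    ((continuous_backOrbit (continuous_backStep hU.isClosed hσ hopen hinj)).isClosedEmbedding
      backOrbit_injective).isEmbedding
  let e := hemb.toHomeomorph.trans (Homeomorph.setCongr (range_backOrbit hinj))
  refine ⟨e.symm, fun y => ?_⟩
  have hy : backOrbit σ (e.symm y) = y := congrArg Subtype.val (e.apply_symm_apply y)
  rw [← hy, backOrbit_zero]
end

section
/- Let A be an n × n {0,1}-matrix, X_A the one-sided subshift with shift σ_A : X_A → X_A (here U = X_A, which is clopen, and σ_A(X_A) is open). Then there is a homeomorphism Φ : X̃_A → X̄_A from the σ_A-extension X̃_A of X_A onto the two-sided subshift X̄_A = {x ∈ {1,...,n}^ℤ : A(x_i, x_{i+1}) = 1 ∀ i} satisfying Φ ∘ σ̃_A = σ̄_A ∘ Φ. -/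
/-- The two-sided subshift of finite type of `A`. -/
def TwoShiftSpace (n : ℕ) (A : Fin n → Fin n → ℕ) : Set (ℤ → Fin n) :=
  {x | ∀ i : ℤ, A (x i) (x (i + 1)) = 1}

/-- The two-sided shift map on `X̄_A`. -/
def twoShiftMap (n : ℕ) (A : Fin n → Fin n → ℕ) :
    TwoShiftSpace n A → TwoShiftSpace n A :=
  fun x => ⟨fun i => x.1 (i + 1), fun i => x.2 (i + 1)⟩

/-- The `σ`-extension of a (globally defined) dynamical system `σ : X → X`, i.e.
the case `U = X` of the extension space `X̃`: sequences in `(X ⊔ {0})^ℕ` which are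
either finite chains `(x₀,...,x_N,0,0,...)` with `σ(x_i) = x_{i-1}` and
`x_N ∉ σ(X)`, or infinite chains with `σ(x_i) = x_{i-1}` for all `i ≥ 1`. -/
def SigmaExtTotal {X : Type*} (σ : X → X) : Set (ℕ → X ⊕ Unit) :=
  {y | (∃ N : ℕ,
          (∀ i : ℕ, 1 ≤ i → i ≤ N →
            ∃ u : X, y i = Sum.inl u ∧ y (i - 1) = Sum.inl (σ u)) ∧
          (∃ xN : X, y N = Sum.inl xN ∧ xN ∉ Set.range σ) ∧
          (∀ i : ℕ, N < i → y i = Sum.inr ()))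
      ∨ (∀ i : ℕ, 1 ≤ i →
          ∃ u : X, y i = Sum.inl u ∧ y (i - 1) = Sum.inl (σ u))}

/-!
Since every column of `A` is nonzero, `σ_A` is surjective, so `X̃_A` contains no finite chains:
it is the natural extension `{f : ℕ → X_A | σ_A (f (i+1)) = f i}` of `σ_A`, embedded in
`(X_A ⊔ {0})^ℕ` through `inl`. For such a chain the symbol `(f i) (m)` depends only on `m - i`,
so the chain is the same thing as the bi-infinite word `k ↦ (f i) (k + i)`, and under this
correspondence `σ̃_A` becomes the two-sided shift.
-/

open Function Topology

def naturalExtension {X : Type*} (σ : X → X) : Set (ℕ → X) :=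
  {f | ∀ i, σ (f (i + 1)) = f i}

section NaturalExtension

variable {X : Type*} {σ : X → X}

theorem iterate_of_mem_naturalExtension {f : ℕ → X} (hf : f ∈ naturalExtension σ) (i d : ℕ) :
    σ^[d] (f (i + d)) = f i := by
  induction d with
  | zero => rfl
  | succ d ih => rw [iterate_succ_apply, ← add_assoc, hf, ih]

theorem sigmaExtTotal_eq_range (hσ : Surjective σ) :
    SigmaExtTotal σ = Set.range fun f : naturalExtension σ => Sum.inl ∘ f.1 := by
  ext y
  constructor
  · rintro (⟨N, -, ⟨xN, -, hxN⟩, -⟩ | h)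
    · exact absurd (hσ xN) hxN
    · choose u hu hσu using fun i => h (i + 1) (by omega)
      simp only [add_tsub_cancel_right] at hσu
      have hchain : ∀ i, σ (σ (u (i + 1))) = σ (u i) := fun i => by
        rw [Sum.inl_injective ((hσu (i + 1)).symm.trans (hu i))]
      exact ⟨⟨fun i => σ (u i), hchain⟩, funext fun i => (hσu i).symm⟩
  · rintro ⟨f, rfl⟩
    refine Or.inr fun i hi => ⟨f.1 i, rfl, ?_⟩
    obtain ⟨m, rfl⟩ := Nat.exists_eq_add_of_le' hi
    simp [f.2 m]

variable [TopologicalSpace X]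

noncomputable def naturalExtensionHomeomorphSigmaExtTotal (hσ : Surjective σ) :
    naturalExtension σ ≃ₜ SigmaExtTotal σ :=
  ((IsEmbedding.piMap fun _ => IsEmbedding.inl).comp IsEmbedding.subtypeVal).toHomeomorph.trans
    (Homeomorph.setCongr (sigmaExtTotal_eq_range hσ).symm)

end NaturalExtension

namespace ShiftSpace

variable {n : ℕ} {A : Fin n → Fin n → ℕ}

theorem shiftMap_surjective (hcol : ∀ j : Fin n, ∃ i : Fin n, A i j = 1) :
    Surjective (shiftMap n A) := by
  intro x
  obtain ⟨j, hj⟩ := hcol (x.1 0)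
  refine ⟨⟨fun i => Nat.casesOn i j fun m => x.1 m, ?_⟩, rfl⟩
  rintro (_ | m)
  · exact hj
  · exact x.2 m

theorem shiftMap_iterate_apply (x : ShiftSpace n A) (d m : ℕ) :
    ((shiftMap n A)^[d] x).1 m = x.1 (m + d) := by
  induction d generalizing m with
  | zero => rfl
  | succ d ih => rw [iterate_succ_apply', shiftMap, ih, add_right_comm, add_assoc]

theorem apply_eq_of_mem_naturalExtension {f : ℕ → ShiftSpace n A}
    (hf : f ∈ naturalExtension (shiftMap n A)) {i j m m' : ℕ} (h : (m : ℤ) - i = m' - j) :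
    (f i).1 m = (f j).1 m' := by
  wlog hij : i ≤ j generalizing i j m m'
  · exact (this h.symm (by omega)).symm
  obtain ⟨d, rfl⟩ := Nat.exists_eq_add_of_le hij
  rw [← iterate_of_mem_naturalExtension hf i d, shiftMap_iterate_apply, show m' = m + d by omega]

def ofTwoShift (x : TwoShiftSpace n A) (i : ℕ) : ShiftSpace n A :=
  ⟨fun m => x.1 (m - i), fun m => by
    simpa only [Nat.cast_succ, sub_add_eq_add_sub] using x.2 (m - i)⟩

theorem ofTwoShift_mem_naturalExtension (x : TwoShiftSpace n A) :
    ofTwoShift x ∈ naturalExtension (shiftMap n A) := fun i =>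
  Subtype.ext <| funext fun m => congrArg x.1 (by push_cast; ring)

-- Reads `x k` from the row `f (-k)` if `k < 0` and from `f 0` otherwise; any row `f i`
-- at position `k + i` would give the same symbol.
def toTwoShift (f : naturalExtension (shiftMap n A)) : TwoShiftSpace n A :=
  ⟨fun k => (f.1 (-k).toNat).1 k.toNat, fun k => by
    dsimp only
    rw [apply_eq_of_mem_naturalExtension f.2 (show ((k + 1).toNat : ℤ) - (-(k + 1)).toNat
      = (k.toNat + 1 : ℕ) - (-k).toNat by omega)]
    exact (f.1 _).2 _⟩

def naturalExtensionHomeomorph : naturalExtension (shiftMap n A) ≃ₜ TwoShiftSpace n A where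
  toFun := toTwoShift
  invFun x := ⟨ofTwoShift x, ofTwoShift_mem_naturalExtension x⟩
  left_inv f := Subtype.ext <| funext fun i => Subtype.ext <| funext fun m =>
    apply_eq_of_mem_naturalExtension f.2 (by omega)
  right_inv x := Subtype.ext <| funext fun k => congrArg x.1 (by omega)
  continuous_toFun := by
    refine .subtype_mk (continuous_pi fun k => ?_) _
    exact (continuous_apply _).comp <| continuous_subtype_val.comp <|
      (continuous_apply _).comp continuous_subtype_val
  continuous_invFun := by
    refine .subtype_mk (continuous_pi fun i => .subtype_mk (continuous_pi fun m => ?_) _) _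
    exact (continuous_apply _).comp continuous_subtype_val

@[simp]
theorem naturalExtensionHomeomorph_apply (f : naturalExtension (shiftMap n A)) :
    naturalExtensionHomeomorph f = toTwoShift f :=
  rfl

theorem toTwoShift_eq_twoShiftMap {f g : naturalExtension (shiftMap n A)}
    (hgf : ∀ i, g.1 i = shiftMap n A (f.1 i)) :
    toTwoShift g = twoShiftMap n A (toTwoShift f) := by
  refine Subtype.ext <| funext fun k => ?_
  change (g.1 (-k).toNat).1 k.toNat = (f.1 (-(k + 1)).toNat).1 (k + 1).toNat
  rw [hgf]
  exact apply_eq_of_mem_naturalExtension f.2 (by omega)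

end ShiftSpace

theorem sigmaExt_shiftSpace_homeomorph_twoShiftSpace_general (n : ℕ)
    (A : Fin n → Fin n → ℕ) (hcol : ∀ j : Fin n, ∃ i : Fin n, A i j = 1) :
    ∃ e : SigmaExtTotal (shiftMap n A) ≃ₜ TwoShiftSpace n A,
      ∀ y z : SigmaExtTotal (shiftMap n A),
        (∀ i : ℕ, z.1 (i + 1) = y.1 i) →
        (∀ x₀ : ShiftSpace n A, y.1 0 = Sum.inl x₀ →
          z.1 0 = Sum.inl (shiftMap n A x₀)) →
        e z = twoShiftMap n A (e y) := by
  set ι := naturalExtensionHomeomorphSigmaExtTotal (ShiftSpace.shiftMap_surjective hcol)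
  refine ⟨ι.symm.trans ShiftSpace.naturalExtensionHomeomorph, fun y z hzy _ => ?_⟩
  obtain ⟨f, rfl⟩ := ι.surjective y
  obtain ⟨g, rfl⟩ := ι.surjective z
  have hgf : ∀ i, g.1 i = shiftMap n A (f.1 i) := fun i => by
    rw [← g.2 i, Sum.inl_injective (hzy i)]
  simpa using ShiftSpace.toTwoShift_eq_twoShiftMap hgf

/-- for the one-sided subshift `(X_A, σ_A)` (with `U = X_A` clopen and
`σ_A(X_A)` open; we assume every column of `A` is nonzero), the `σ_A`-extension
`X̃_A` is homeomorphic to the two-sided subshift `X̄_A` via a homeomorphism `Φ`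
intertwining `σ̃_A` and `σ̄_A`: whenever `z = σ̃_A(y)` (that is, `z_{i+1} = y_i` and
`z_0 = σ_A(y_0)`), we have `Φ(z) = σ̄_A(Φ(y))`. -/
theorem sigmaExt_shiftSpace_homeomorph_twoShiftSpace (n : ℕ)
    (A : Fin n → Fin n → ℕ) (hA : ∀ i j, A i j = 0 ∨ A i j = 1)
    (hcol : ∀ j : Fin n, ∃ i : Fin n, A i j = 1) :
    ∃ e : SigmaExtTotal (shiftMap n A) ≃ₜ TwoShiftSpace n A,
      ∀ y z : SigmaExtTotal (shiftMap n A),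
        (∀ i : ℕ, z.1 (i + 1) = y.1 i) →
        (∀ x₀ : ShiftSpace n A, y.1 0 = Sum.inl x₀ →
          z.1 0 = Sum.inl (shiftMap n A x₀)) →
        e z = twoShiftMap n A (e y) :=
  sigmaExt_shiftSpace_homeomorph_twoShiftSpace_general n A hcol
end

section
/- Let A be an n × n {0,1}-matrix with transitive directed graph that is not a cycle, and let r be the admissible word x_1 x_2 ... x_m x_1 from a simple return path at vertex x_1 (x_j ≠ x_1 for 1 < j ≤ m, A(x_m, x_1) = 1). Then the invariant open set V_r = {x ∈ X̄_A : r occurs in x} of the two-sided subshift X̄_A is a proper subset: there exists z ∈ X̄_A in which the word r does not occur. -/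
/-- The finite word `r` occurs in the two-sided sequence `x`. -/
def Occurs (n : ℕ) (r : List (Fin n)) (x : ℤ → Fin n) : Prop :=
  ∃ k : ℤ, ∀ j : Fin r.length, x (k + (j : ℤ)) = r.get j

/-!
For a closed walk `x :: p` that visits `x` only at its start, the periodic point `(x :: p)^∞`
carries `x` exactly at the multiples of the period, so an occurrence of `x :: q ++ [x]` with
`x ∉ q` in it forces `q = p`. It therefore suffices to find such a first-return loop at `x₁`
other than `w`. If `i` has two successors `j ≠ k`, walk from `x₁` to `i` without returning to
`x₁`, take the edge to `j` (resp. `k`), then walk on until the first return to `x₁`: the two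
loops agree up to `i` and differ right after it, so one of them is not `w`.
-/

open List Relation

section Loops

variable {α : Type*} {R : α → α → Prop}

/-- `x :: p` is a closed walk of `R` at `x` that returns to `x` only at its end. -/
def IsFirstReturnLoop (R : α → α → Prop) (x : α) (p : List α) : Prop :=
  x ∉ p ∧ IsChain R (x :: p ++ [x])

theorem List.IsChain.append_singleton {a b : α} {l : List α} (h : IsChain R (a :: l))
    (hb : R ((a :: l).getLast (cons_ne_nil a l)) b) : IsChain R (a :: l ++ [b]) :=
  h.append (isChain_singleton b) (by simpa [getLast?_eq_some_getLast] using hb)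

theorem exists_isChain_cons_notMem_of_relationReflTransGen {x i : α}
    (h : ReflTransGen R x i) :
    ∃ p, IsChain R (x :: p) ∧ x ∉ p ∧ (x :: p).getLast (cons_ne_nil x p) = i := by
  induction h with
  | refl => exact ⟨[], isChain_singleton x, not_mem_nil, rfl⟩
  | @tail b c _ hbc ih =>
    obtain ⟨p, hchain, hxp, hlast⟩ := ih
    by_cases hc : c = x
    · exact ⟨[], isChain_singleton x, not_mem_nil, hc.symm⟩
    · refine ⟨p ++ [c], hchain.append_singleton (hlast ▸ hbc), ?_, by simp⟩
      simp [hxp, Ne.symm hc]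

theorem exists_isChain_append_notMem_of_relationReflTransGen {v x : α}
    (h : ReflTransGen R v x) (hv : v ≠ x) :
    ∃ q, IsChain R (v :: q ++ [x]) ∧ x ∉ q := by
  induction h using ReflTransGen.head_induction_on with
  | refl => exact absurd rfl hv
  | @head a c hac _ ih =>
    by_cases hc : c = x
    · exact ⟨[], by simpa [hc] using hac, not_mem_nil⟩
    · obtain ⟨q, hchain, hxq⟩ := ih hc
      exact ⟨c :: q, hchain.cons_cons hac, by simp [hxq, Ne.symm hc]⟩

theorem exists_isFirstReturnLoop_append_cons {x v : α} {p : List α} (hxp : x ∉ p)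
    (hpv : IsChain R (x :: p ++ [v])) (hv : ReflTransGen R v x) :
    ∃ q l, IsFirstReturnLoop R x q ∧ q ++ [x] = p ++ v :: l := by
  by_cases hvx : v = x
  · subst hvx
    exact ⟨p, [], ⟨hxp, hpv⟩, rfl⟩
  · obtain ⟨q, hchain, hxq⟩ := exists_isChain_append_notMem_of_relationReflTransGen hv hvx
    refine ⟨p ++ v :: q, q ++ [x], ⟨by simp [hxp, hxq, Ne.symm hvx], ?_⟩, by simp⟩
    simpa using isChain_split.2 ⟨hpv, hchain⟩

theorem exists_isFirstReturnLoop_ne {x i j k : α} (hi : ReflTransGen R x i) (hij : R i j)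
    (hik : R i k) (hjk : j ≠ k) (hj : ReflTransGen R j x) (hk : ReflTransGen R k x)
    (w : List α) : ∃ q, IsFirstReturnLoop R x q ∧ q ≠ w := by
  obtain ⟨p, hchain, hxp, hlast⟩ := exists_isChain_cons_notMem_of_relationReflTransGen hi
  obtain ⟨qj, lj, hqj, hlj⟩ :=
    exists_isFirstReturnLoop_append_cons hxp (hchain.append_singleton (hlast ▸ hij)) hj
  obtain ⟨qk, lk, hqk, hlk⟩ :=
    exists_isFirstReturnLoop_append_cons hxp (hchain.append_singleton (hlast ▸ hik)) hk
  by_cases hw : qj = w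
  · refine ⟨qk, hqk, fun hkw => hjk ?_⟩
    have : p ++ j :: lj = p ++ k :: lk := by rw [← hlj, ← hlk, hw, hkw]
    exact (cons_eq_cons.1 (append_cancel_left this)).1
  · exact ⟨qj, hqj, hw⟩

end Loops

section Cyclic

variable {α : Type*}

def cyclicSeq (a : α) (l : List α) (t : ℤ) : α :=
  (a :: l)[t.natMod (l.length + 1 : ℕ)]'(Int.natMod_lt l.length.succ_ne_zero)

def window (z : ℤ → α) (k : ℤ) (N : ℕ) : List α :=
  (range N).map fun s : ℕ => z (k + s)

theorem window_prefix_window (z : ℤ → α) (k : ℤ) {N M : ℕ} (h : N ≤ M) :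
    window z k N <+: window z k M := by
  obtain ⟨d, rfl⟩ := Nat.exists_eq_add_of_le h
  rw [window, window, range_add, map_append]
  exact prefix_append _ _

theorem cyclicSeq_add_mul (a : α) (l : List α) (t c : ℤ) :
    cyclicSeq a l (t + c * (l.length + 1 : ℕ)) = cyclicSeq a l t := by
  simp only [cyclicSeq, Int.natMod, Int.add_mul_emod_self_right]

theorem cyclicSeq_natCast (a : α) (l : List α) {s : ℕ} (hs : s ≤ l.length + 1) :
    cyclicSeq a l s = (a :: l ++ [a])[s]'(by simp; omega) := by
  rcases hs.lt_or_eq with hs | rfl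
  · simp only [cyclicSeq, Int.natMod, ← Int.natCast_mod, Int.toNat_natCast, Nat.mod_eq_of_lt hs]
    exact (getElem_append_left (by simpa using hs)).symm
  · simp [cyclicSeq, Int.natMod]

theorem window_cyclicSeq_of_dvd (a : α) (l : List α) {k : ℤ}
    (hk : ((l.length + 1 : ℕ) : ℤ) ∣ k) :
    window (cyclicSeq a l) k (l.length + 2) = a :: l ++ [a] := by
  obtain ⟨c, rfl⟩ := hk
  refine ext_getElem (by simp [window]) fun s hs _ => ?_
  simp only [window, getElem_map, getElem_range]
  rw [add_comm, mul_comm, cyclicSeq_add_mul,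
    cyclicSeq_natCast a l (by simp [window] at hs; omega)]

theorem eq_zero_of_getElem_cons_eq_self {a : α} {l : List α} (ha : a ∉ l) {i : ℕ}
    {hi : i < (a :: l).length} (h : (a :: l)[i] = a) : i = 0 := by
  cases i with
  | zero => rfl
  | succ i => exact absurd (h ▸ getElem_mem _) ha

theorem dvd_of_cyclicSeq_eq {a : α} {l : List α} (ha : a ∉ l) {t : ℤ}
    (ht : cyclicSeq a l t = a) : ((l.length + 1 : ℕ) : ℤ) ∣ t := by
  have hidx : (t % (l.length + 1 : ℕ)).toNat = 0 := eq_zero_of_getElem_cons_eq_self ha ht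
  have hnonneg := Int.emod_nonneg t (by omega : ((l.length + 1 : ℕ) : ℤ) ≠ 0)
  exact Int.dvd_of_emod_eq_zero (by omega)

theorem isChain_cyclicSeq {R : α → α → Prop} {a : α} {l : List α}
    (h : IsChain R (a :: l ++ [a])) (t : ℤ) :
    R (cyclicSeq a l t) (cyclicSeq a l (t + 1)) := by
  obtain ⟨s, hs, hts⟩ :
      ∃ s : ℕ, s < l.length + 1 ∧ t = s + t / (l.length + 1 : ℕ) * (l.length + 1 : ℕ) :=
    ⟨t.natMod (l.length + 1 : ℕ), Int.natMod_lt l.length.succ_ne_zero, by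
      rw [Int.natMod, Int.toNat_of_nonneg (Int.emod_nonneg _ (by omega)), Int.emod_add_ediv_mul]⟩
  rw [hts, cyclicSeq_add_mul, add_right_comm, cyclicSeq_add_mul,
    ← Nat.cast_succ, cyclicSeq_natCast a l hs.le, cyclicSeq_natCast a l hs]
  exact h.getElem s (by simp; omega)

theorem eq_of_prefix_append_singleton {a : α} {p q : List α} (hq : a ∉ q)
    (h : p ++ [a] <+: q ++ [a]) : p = q := by
  have hle : p.length ≤ q.length := by simpa using h.length_le
  rcases hle.lt_or_eq with hlt | hlen
  · have hsub : p ++ [a] <+: q := by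
      rw [prefix_iff_eq_take] at h ⊢
      rwa [take_append_of_le_length (by simpa using hlt)] at h
    exact absurd (hsub.subset (by simp)) hq
  · exact append_cancel_right (h.eq_of_length (by simp [hlen]))

theorem eq_of_window_cyclicSeq_eq {a : α} {l q : List α} (hl : a ∉ l) (hq : a ∉ q) {k : ℤ}
    (h : window (cyclicSeq a l) k (q.length + 2) = a :: q ++ [a]) : q = l := by
  have hk : cyclicSeq a l k = a := by
    simpa [window] using (ext_getElem_iff.1 h).2 0 (by simp [window]) (by simp)
  have hloop := window_cyclicSeq_of_dvd a l (dvd_of_cyclicSeq_eq hl hk)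
  have hcomp := prefix_or_prefix_of_prefix
    (h ▸ window_prefix_window _ k (le_max_left _ (l.length + 2)))
    (hloop ▸ window_prefix_window _ k (le_max_right (q.length + 2) _))
  rcases hcomp with hql | hlq
  · exact eq_of_prefix_append_singleton hl (cons_prefix_cons.1 hql).2
  · exact (eq_of_prefix_append_singleton hq (cons_prefix_cons.1 hlq).2).symm

end Cyclic

theorem occurs_iff_exists_window_eq {n : ℕ} (r : List (Fin n)) (z : ℤ → Fin n) :
    Occurs n r z ↔ ∃ k, window z k r.length = r := by
  simp only [Occurs, window, ext_getElem_iff, length_map, length_range, getElem_map,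
    getElem_range, Fin.forall_iff, get_eq_getElem, true_and]
  exact exists_congr fun k => forall_congr' fun j => ⟨fun h hj _ => h hj, fun h hj => h hj hj⟩

theorem relationReflTransGen_of_graphTransitive {n : ℕ} {A : Fin n → Fin n → ℕ}
    (h : GraphTransitive n A) (i j : Fin n) : ReflTransGen (fun a b => A a b = 1) i j := by
  obtain ⟨w, hchain, hhead, hlast⟩ := h i j
  obtain ⟨l, rfl⟩ : ∃ l, w = i :: l := ⟨w.tail, eq_cons_of_mem_head? hhead⟩
  exact relationReflTransGen_of_exists_isChain_cons l hchain
    (Option.some_inj.1 ((getLast?_eq_some_getLast _).symm.trans hlast))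

theorem occurrence_set_proper_general (n : ℕ) (A : Fin n → Fin n → ℕ)
    (htrans : GraphTransitive n A)
    (hnc : NotACycle n A) (x₁ : Fin n) (w : List (Fin n))
    (hhead : w.head? = some x₁)
    (htail : ∀ a ∈ w.tail, a ≠ x₁) :
    ∃ z : TwoShiftSpace n A, ¬ Occurs n (w ++ [x₁]) z.1 := by
  obtain ⟨i, j, k, hjk, hij, hik⟩ := hnc
  have hreach := relationReflTransGen_of_graphTransitive htrans
  obtain ⟨q, ⟨hxq, hloop⟩, hqw⟩ := exists_isFirstReturnLoop_ne (hreach x₁ i) hij hik hjk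
    (hreach j x₁) (hreach k x₁) w.tail
  refine ⟨⟨cyclicSeq x₁ q, isChain_cyclicSeq hloop⟩, ?_⟩
  rw [occurs_iff_exists_window_eq, eq_cons_of_mem_head? hhead]
  rintro ⟨k, hk⟩
  exact hqw (eq_of_window_cyclicSeq_eq hxq (fun h => htail _ h rfl) (by simpa using hk)).symm

/-- with `Gr(A)` transitive and not a cycle, and `r = x₁...x_m x₁` the
word coming from a simple return path at `x₁` (given as a list `w = x₁...x_m` with
`x_j ≠ x₁` for `j > 1` and `A(x_m, x₁) = 1`), the invariant open set
`V_r = {x ∈ X̄_A : r occurs in x}` is proper: some `z ∈ X̄_A` contains no occurrence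
of `r`. -/
theorem occurrence_set_proper (n : ℕ) (A : Fin n → Fin n → ℕ)
    (hA : ∀ i j, A i j = 0 ∨ A i j = 1) (htrans : GraphTransitive n A)
    (hnc : NotACycle n A) (x₁ : Fin n) (w : List (Fin n)) (hw : w ≠ [])
    (hhead : w.head? = some x₁) (hchain : w.Chain' (fun a b => A a b = 1))
    (htail : ∀ a ∈ w.tail, a ≠ x₁) (hlast : A (w.getLast hw) x₁ = 1) :
    ∃ z : TwoShiftSpace n A, ¬ Occurs n (w ++ [x₁]) z.1 :=
  occurrence_set_proper_general n A htrans hnc x₁ w hhead htail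
end
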